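/- A degree a is recursively traceable if and only if for every unbounded, non-decreasing computable function p : ω → ω with p(0) > 0 and every function f computable in a, there exists a computable function g such that |D_{g(n)}| ≤ p(n) and f(n) ∈ D_{g(n)} for all n. -/

import Mathlib

open scoped ENNReal

attribute [local instance] Classical.propDecidable

/-- Cantor space `2^ω`. -/
abbrev Cantor := ℕ → Bool

/-- The length-`n` initial segment `X↾n` of `X ∈ 2^ω`, as a finite binary string. -/
def seg (X : Cantor) (n : ℕ) : List Bool := (List.range n).map X

/-- `σ ≺ X` : the finite string `σ` is an initial segment of `X`. -/
def PrefixOfSeq (σ : List Bool) (X : Cantor) : Prop := seg X σ.length = σ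

/-- The basic clopen set `[σ]` of all infinite sequences extending `σ`. -/
def cyl (σ : List Bool) : Set Cantor := {X | PrefixOfSeq σ X}

/-- Partial recursive functions relative to a (total) oracle `O : ℕ → ℕ`:
the oracle version of `Nat.Partrec`. -/
inductive RecursiveInOracle (O : ℕ → ℕ) : (ℕ →. ℕ) → Prop
  | oracle : RecursiveInOracle O (fun n => Part.some (O n))
  | zero : RecursiveInOracle O (pure 0)
  | succ : RecursiveInOracle O Nat.succ
  | left : RecursiveInOracle O ↑fun n : ℕ => n.unpair.1
  | right : RecursiveInOracle O ↑fun n : ℕ => n.unpair.2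
  | pair {f g} : RecursiveInOracle O f → RecursiveInOracle O g →
      RecursiveInOracle O fun n => Nat.pair <$> f n <*> g n
  | comp {f g} : RecursiveInOracle O f → RecursiveInOracle O g →
      RecursiveInOracle O fun n => g n >>= f
  | prec {f g} : RecursiveInOracle O f → RecursiveInOracle O g →
      RecursiveInOracle O (Nat.unpaired fun a n =>
        n.rec (f a) fun y IH => do let i ← IH; g (Nat.pair a (Nat.pair y i)))
  | rfind {f} : RecursiveInOracle O f →
      RecursiveInOracle O fun a => Nat.rfind fun n => (fun m => m = 0) <$> f (Nat.pair a n)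

/-- A (total) function between coded types is recursive in the oracle `O`. -/
def RecIn {α β : Type} [Primcodable α] [Primcodable β] (O : ℕ → ℕ) (f : α → β) : Prop :=
  RecursiveInOracle O fun n =>
    (Part.ofOption (Encodable.decode (α := α) n)).bind fun a => Part.some (Encodable.encode (f a))

/-- A set `X ∈ 2^ω` viewed as a total oracle. -/
def oracleOf (X : Cantor) : ℕ → ℕ := fun n => cond (X n) 1 0

/-- A function between coded types viewed as a total oracle on `ℕ`. -/
def oracleFn {α β : Type} [Primcodable α] [Primcodable β] (f : α → β) : ℕ → ℕ :=
  fun n => Encodable.encode ((Encodable.decode (α := α) n).map f)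

/-- Turing reducibility `X ≤_T Y` between elements of `2^ω`. -/
def TRed (X Y : Cantor) : Prop := RecIn (oracleOf Y) X

/-- Turing equivalence `X ≡_T Y`. -/
def TEquiv (X Y : Cantor) : Prop := TRed X Y ∧ TRed Y X

/-- The Turing degree of `Z`, as a set of reals. -/
def degCl (Z : Cantor) : Set Cantor := {Y | TEquiv Y Z}

/-- Many-one reducibility `X ≤_m Y` between subsets of `ω` (as elements of `2^ω`). -/
def ManyOneRed (X Y : Cantor) : Prop := ∃ g : ℕ → ℕ, Computable g ∧ ∀ n, X n = Y (g n)

/-- The recursive join `A ⊕ B`. -/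
def join (A B : Cantor) : Cantor := fun n => if n % 2 = 0 then A (n / 2) else B (n / 2)

/-- `X` is of minimal Turing degree. -/
def MinimalDeg (X : Cantor) : Prop :=
  ¬Computable X ∧ ∀ Y : Cantor, TRed Y X → Computable Y ∨ TRed X Y

/-- `B` is a minimal cover of the countable class `S`: `B` strictly bounds every member of `S`,
and everything below `B` is either below some member of `S` or joins with one above `B`. -/
def MinimalCoverOf (B : Cantor) (S : Set Cantor) : Prop :=
  (∀ A ∈ S, TRed A B ∧ ¬TRed B A) ∧
  ∀ C : Cantor, TRed C B → ∃ A ∈ S, TRed C A ∨ TRed B (join A C)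

/-- `R` is of hyperimmune-free degree: every function it computes is dominated by a
computable function. -/
def HypImmFree (R : Cantor) : Prop :=
  ∀ f : ℕ → ℕ, RecIn (oracleOf R) f → ∃ g : ℕ → ℕ, Computable g ∧ ∀ n, f n ≤ g n

/-- `d` is a supermartingale. -/
def IsSupermartingale (d : List Bool → ℝ) : Prop :=
  (∀ σ, 0 ≤ d σ) ∧ ∀ σ, d (σ ++ [false]) + d (σ ++ [true]) ≤ 2 * d σ

/-- `d` is a martingale. -/
def IsMartingale (d : List Bool → ℝ) : Prop :=
  (∀ σ, 0 ≤ d σ) ∧ ∀ σ, d (σ ++ [false]) + d (σ ++ [true]) = 2 * d σ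

/-- `d` is lower semicomputable (r.e.) relative to oracle `O`: it is the monotone limit of a
uniformly `O`-recursive sequence of rationals. -/
def LowerSemicomputableIn (O : ℕ → ℕ) (d : List Bool → ℝ) : Prop :=
  ∃ q : List Bool × ℕ → ℚ, RecIn O q ∧ (∀ σ, Monotone fun n => q (σ, n)) ∧
    ∀ σ, Filter.Tendsto (fun n => (q (σ, n) : ℝ)) Filter.atTop (nhds (d σ))

/-- `d` is lower semicomputable (an r.e. supermartingale value function). -/
def LowerSemicomputable (d : List Bool → ℝ) : Prop :=
  ∃ q : List Bool × ℕ → ℚ, Computable q ∧ (∀ σ, Monotone fun n => q (σ, n)) ∧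
    ∀ σ, Filter.Tendsto (fun n => (q (σ, n) : ℝ)) Filter.atTop (nhds (d σ))

/-- `d` `s`-succeeds on `X`: `limsup_n d(X↾n)/2^{(1-s)n} = ∞`
(equivalently, the sequence is unbounded). -/
def Succeeds (d : List Bool → ℝ) (s : ℚ) (X : Cantor) : Prop :=
  ∀ C : ℝ, ∃ n : ℕ, C * (2 : ℝ) ^ ((1 - (s : ℝ)) * n) ≤ d (seg X n)

/-- `d` strongly `s`-succeeds on `X`: `liminf_n d(X↾n)/2^{(1-s)n} = ∞`. -/
def SucceedsStrongly (d : List Bool → ℝ) (s : ℚ) (X : Cantor) : Prop :=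
  ∀ C : ℝ, ∃ N : ℕ, ∀ n ≥ N, C * (2 : ℝ) ^ ((1 - (s : ℝ)) * n) ≤ d (seg X n)

/-- Generic dimension notion: the infimum of all `s ∈ ℚ ∩ [0,1]` such that some supermartingale
satisfying `P` succeeds (in the sense of `Succ`) on every member of `A` (with value `1` if there
is no such `s`). -/
noncomputable def dimVia (P : (List Bool → ℝ) → Prop)
    (Succ : (List Bool → ℝ) → ℚ → Cantor → Prop) (A : Set Cantor) : ℝ≥0∞ :=
  sInf ({1} ∪ {x : ℝ≥0∞ | ∃ s : ℚ, 0 ≤ s ∧ s ≤ 1 ∧ x = ENNReal.ofReal (s : ℝ) ∧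
    ∃ d, IsSupermartingale d ∧ P d ∧ ∀ X ∈ A, Succ d s X})

/-- Effective Hausdorff dimension of a class (Lutz). -/
noncomputable def effDim (A : Set Cantor) : ℝ≥0∞ := dimVia LowerSemicomputable Succeeds A

/-- Effective Hausdorff dimension relative to oracle `O`. -/
noncomputable def effDimIn (O : ℕ → ℕ) (A : Set Cantor) : ℝ≥0∞ :=
  dimVia (LowerSemicomputableIn O) Succeeds A

/-- Effective packing dimension of a class. -/
noncomputable def effPDim (A : Set Cantor) : ℝ≥0∞ := dimVia LowerSemicomputable SucceedsStrongly A

/-- Effective packing dimension relative to oracle `O`. -/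
noncomputable def effPDimIn (O : ℕ → ℕ) (A : Set Cantor) : ℝ≥0∞ :=
  dimVia (LowerSemicomputableIn O) SucceedsStrongly A

/-- (Classical) Hausdorff dimension of a subset of `2^ω`, via the point-to-set principle:
the infimum over all oracles `Z` of the effective-in-`Z` Hausdorff dimension. -/
noncomputable def hausdorffDim (A : Set Cantor) : ℝ≥0∞ := ⨅ Z : Cantor, effDimIn (oracleOf Z) A

/-- (Classical) packing dimension of a subset of `2^ω`, via the point-to-set principle. -/
noncomputable def packingDim (A : Set Cantor) : ℝ≥0∞ := ⨅ Z : Cantor, effPDimIn (oracleOf Z) A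

/-- The canonical enumeration `n ↦ D_n` of finite subsets of `ω`: `D_n` is the set of
positions of 1-bits in the binary expansion of `n`. -/
def Dfin (n : ℕ) : Finset ℕ := (Finset.range n).filter fun i => n.testBit i = true

/-- `A` is recursively traceable. -/
def RecTraceable (A : Cantor) : Prop :=
  ∃ b : ℕ → ℕ, Computable b ∧ ∀ f : ℕ → ℕ, RecIn (oracleOf A) f →
    ∃ g : ℕ → ℕ, Computable g ∧ ∀ n, (Dfin (g n)).card ≤ b n ∧ f n ∈ Dfin (g n)

/-- A function tree: `T(σi)` properly extends `T(σ)`, and `T(σ0)`, `T(σ1)` are incomparable. -/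
structure FunTree where
  f : List Bool → List Bool
  extend : ∀ σ (i : Bool), f σ <+: f (σ ++ [i]) ∧ (f σ).length < (f (σ ++ [i])).length
  split : ∀ σ, ¬ f (σ ++ [false]) <+: f (σ ++ [true]) ∧ ¬ f (σ ++ [true]) <+: f (σ ++ [false])

/-- `[T]`, the set of infinite paths through the function tree `T`. -/
def Paths (T : FunTree) : Set Cantor :=
  {X | ∃ Y : Cantor, ∀ n, PrefixOfSeq (T.f (seg Y n)) X}

/-- `T ≤_T Y` for a function tree `T` and a real `Y`. -/
def TreeRedToReal (T : FunTree) (Y : Cantor) : Prop := RecIn (oracleOf Y) T.f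

/-- `Y ≤_T T` for a real `Y` and a function tree `T` (the tree used as an oracle). -/
def RealRedToTree (Y : Cantor) (T : FunTree) : Prop := RecIn (oracleFn T.f) Y

/-- `S ≤_T T` between function trees. -/
def TreeRedToTree (S T : FunTree) : Prop := RecIn (oracleFn T.f) S.f

/-- `T` is recursively pointed: every path of `T` computes `T`. -/
def RecPointed (T : FunTree) : Prop := ∀ X ∈ Paths T, TreeRedToReal T X

/-- The binary value of a string (read most-significant-bit first); strings of equal
length are lexicographically ordered exactly as their values. -/
def natOfStr (σ : List Bool) : ℕ := σ.foldl (fun a b => 2 * a + cond b 1 0) 0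

/-- The length-`len` binary string with value `k`. -/
def strOfNat (len k : ℕ) : List Bool := (List.range len).map fun i => k.testBit (len - 1 - i)

/-- `l(σ) = Σ_{|τ|=|σ|, τ <_L σ} ν([τ])`, computed via the value correspondence between the
lexicographic order on strings of equal length and the numeric order of their values. -/
noncomputable def lfun (ν : MeasureTheory.Measure Cantor) (σ : List Bool) : ℝ :=
  ∑ k ∈ Finset.range (natOfStr σ), (ν (cyl (strOfNat σ.length k))).toReal

/-- `r(σ) = l(σ) + ν([σ])`. -/
noncomputable def rfun (ν : MeasureTheory.Measure Cantor) (σ : List Bool) : ℝ :=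
  lfun ν σ + (ν (cyl σ)).toReal

/-- `0.A`: the real number in `[0,1]` with binary expansion `A`. -/
noncomputable def realOf (A : Cantor) : ℝ := ∑' n : ℕ, cond (A n) ((2 : ℝ)⁻¹ ^ (n + 1)) 0

/-- The weight `2^{-|σ|}` of an (optional) string, for measuring Martin-Löf tests. -/
noncomputable def testWeight : Option (List Bool) → ℝ≥0∞
  | none => 0
  | some σ => (2 : ℝ≥0∞)⁻¹ ^ σ.length

/-- `V` is a Martin-Löf test: a uniformly computable enumeration whose `n`-th level has
total weight at most `2^{-n}`. -/
def MLTest (V : ℕ × ℕ → Option (List Bool)) : Prop :=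
  Computable V ∧ ∀ n, (∑' k : ℕ, testWeight (V (n, k))) ≤ (2 : ℝ≥0∞)⁻¹ ^ n

/-- `X` is covered by the test `V` (belongs to every level). -/
def MLCovered (V : ℕ × ℕ → Option (List Bool)) (X : Cantor) : Prop :=
  ∀ n, ∃ k σ, V (n, k) = some σ ∧ PrefixOfSeq σ X

/-- `X` is 1-random (Martin-Löf random). -/
def MLRandom (X : Cantor) : Prop := ∀ V, MLTest V → ¬MLCovered V X

/-- An antichain of Turing degrees (containing no computable set, closed under Turing
equivalence, with Turing-inequivalent members pairwise incomparable). -/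
def IsAntichainDeg (B : Set Cantor) : Prop :=
  (∀ X ∈ B, ¬Computable X) ∧ (∀ X ∈ B, ∀ Y, TEquiv Y X → Y ∈ B) ∧
  ∀ X ∈ B, ∀ Y ∈ B, ¬TEquiv X Y → ¬TRed X Y ∧ ¬TRed Y X

/-- A maximal antichain of Turing degrees. -/
def MaximalAntichainDeg (B : Set Cantor) : Prop :=
  IsAntichainDeg B ∧ ∀ Z ∉ B, ¬IsAntichainDeg (B ∪ degCl Z)

/-- A chain of Turing degrees. -/
def IsChainDeg (A : Set Cantor) : Prop :=
  (∀ X ∈ A, ∀ Y, TEquiv Y X → Y ∈ A) ∧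
  ∀ X ∈ A, ∀ Y ∈ A, ¬TEquiv X Y → TRed X Y ∨ TRed Y X

/-- A maximal chain of Turing degrees. -/
def MaximalChainDeg (A : Set Cantor) : Prop :=
  IsChainDeg A ∧ ∀ Z ∉ A, ¬IsChainDeg (A ∪ degCl Z)

/-- The first uncountable ordinal `ω₁`. -/
noncomputable def omega1 : Ordinal := (Cardinal.aleph 1).ord

/-! If every `f ≤_T A` has a trace bounded by a computable `b`, fix `p` and choose computable
block boundaries `S` with `b m ≤ p (S m)`. Trace the function sending `m` to the code of the
tuple `⟨f 0, …, f (S (m + 1) - 1)⟩` with bound `b`: for `n` in the block `[S m, S (m + 1))`, the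
`n`-th entries of the candidate tuples form a set of at most `b m ≤ p n` numbers containing
`f n`. The finitely many `n < S 0` are traced by singletons, which `0 < p 0` permits. The
converse is the special case `p n = n + 1`. -/

open Filter

theorem Dfin_eq_toFinset_bitIndices (n : ℕ) : Dfin n = n.bitIndices.toFinset := by
  ext i
  simp only [Dfin, Finset.mem_filter, Finset.mem_range, List.mem_toFinset, Nat.mem_bitIndices,
    and_iff_right_iff_imp]
  exact fun h => Nat.lt_two_pow_self.trans_le (Nat.ge_two_pow_of_testBit h)

theorem mem_Dfin {n i : ℕ} : i ∈ Dfin n ↔ n.testBit i := by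
  simp [Dfin_eq_toFinset_bitIndices]

theorem Dfin_sum_two_pow (s : Finset ℕ) : Dfin (∑ i ∈ s, 2 ^ i) = s := by
  rw [Dfin_eq_toFinset_bitIndices, Finset.toFinset_bitIndices_sum_two_pow]

theorem Dfin_two_pow (a : ℕ) : Dfin (2 ^ a) = {a} := by
  simpa using Dfin_sum_two_pow {a}

theorem Primrec.nat_pow : Primrec₂ fun a b : ℕ => a ^ b :=
  Primrec₂.unpaired'.mp Nat.Primrec.pow

theorem primrec₂_testBit : Primrec₂ Nat.testBit := by
  have hbit : Primrec fun p : ℕ × ℕ => p.1 / 2 ^ p.2 % 2 :=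
    Primrec.nat_mod.comp (Primrec.nat_div.comp Primrec.fst
      (Primrec.nat_pow.comp (Primrec.const 2) Primrec.snd)) (Primrec.const 2)
  refine (Primrec.eq.comp hbit (Primrec.const 1)).decide.of_eq fun p => ?_
  simp [Nat.testBit_eq_decide_div_mod_eq]

def insertBit (a i : ℕ) : ℕ := bif a.testBit i then a else a + 2 ^ i

theorem insertBit_sum_two_pow (s : Finset ℕ) (i : ℕ) :
    insertBit (∑ j ∈ s, 2 ^ j) i = ∑ j ∈ insert i s, 2 ^ j := by
  by_cases hi : i ∈ s
  · have : (∑ j ∈ s, 2 ^ j).testBit i := by rwa [← mem_Dfin, Dfin_sum_two_pow]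
    simp [insertBit, this, hi]
  · have : (∑ j ∈ s, 2 ^ j).testBit i = false := by
      rwa [← Bool.not_eq_true, ← mem_Dfin, Dfin_sum_two_pow]
    simp [insertBit, this, Finset.sum_insert hi, add_comm]

theorem primrec₂_insertBit : Primrec₂ insertBit :=
  Primrec.cond primrec₂_testBit Primrec.fst
    (Primrec.nat_add.comp Primrec.fst
      (Primrec.nat_pow.comp (Primrec.const 2) Primrec.snd))

def imageCode (h : ℕ → ℕ) (x : ℕ) : ℕ :=
  (List.range x).foldr (fun i acc => bif x.testBit i then insertBit acc (h i) else acc) 0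

theorem foldr_insertBit_eq_sum (h : ℕ → ℕ) (x : ℕ) (l : List ℕ) :
    l.foldr (fun i acc => bif x.testBit i then insertBit acc (h i) else acc) 0 =
      ∑ j ∈ ((l.filter (x.testBit ·)).map h).toFinset, 2 ^ j := by
  induction l with
  | nil => simp
  | cons i l ih => cases hx : x.testBit i <;> simp [hx, ih, insertBit_sum_two_pow]

theorem Dfin_imageCode (h : ℕ → ℕ) (x : ℕ) : Dfin (imageCode h x) = (Dfin x).image h := by
  rw [imageCode, foldr_insertBit_eq_sum, Dfin_sum_two_pow]
  ext j
  simp [Dfin]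

theorem primrec_imageCode {h : ℕ → ℕ → ℕ} (hh : Primrec₂ h) :
    Primrec₂ fun a x => imageCode (h a) x := by
  have hstep : Primrec₂ fun (ax : ℕ × ℕ) (iacc : ℕ × ℕ) =>
      bif ax.2.testBit iacc.1 then insertBit iacc.2 (h ax.1 iacc.1) else iacc.2 :=
    Primrec.cond
      (primrec₂_testBit.comp (Primrec.snd.comp Primrec.fst) (Primrec.fst.comp Primrec.snd))
      (primrec₂_insertBit.comp (Primrec.snd.comp Primrec.snd)
        (hh.comp (Primrec.fst.comp Primrec.fst) (Primrec.fst.comp Primrec.snd)))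
      (Primrec.snd.comp Primrec.snd)
  exact Primrec.list_foldr (Primrec.list_range.comp Primrec.snd) (Primrec.const 0) hstep

/-- Listed backwards: Mathlib codes `a :: l` as `Nat.pair (encode a) (encode l) + 1`, so the code
of `history f k` is defined by primitive recursion on `k` (`encode_history_succ`). -/
def history (f : ℕ → ℕ) : ℕ → List ℕ
  | 0 => []
  | k + 1 => f k :: history f k

theorem encode_history_succ (f : ℕ → ℕ) (k : ℕ) :
    Encodable.encode (history f (k + 1)) = Nat.pair (f k) (Encodable.encode (history f k)) + 1 :=
  rfl

theorem getI_history (f : ℕ → ℕ) {k n : ℕ} (h : n < k) :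
    (history f k).getI (k - 1 - n) = f n := by
  induction k with
  | zero => omega
  | succ k ih =>
    rcases Nat.lt_succ_iff_lt_or_eq.mp h with h | rfl
    · obtain ⟨j, hj⟩ : ∃ j, k - n = j + 1 := ⟨k - 1 - n, by omega⟩
      rw [show k + 1 - 1 - n = j + 1 by omega, history, List.getI_cons_succ, ← ih h]
      congr 1
      omega
    · simp [history]

def codedEntry (j c : ℕ) : ℕ := ((Encodable.decode c : Option (List ℕ)).getD []).getI j

theorem codedEntry_encode (j : ℕ) (l : List ℕ) : codedEntry j (Encodable.encode l) = l.getI j := by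
  simp [codedEntry]

theorem primrec₂_codedEntry : Primrec₂ codedEntry :=
  Primrec.list_getI.comp (Primrec.option_getD.comp (Primrec.decode.comp Primrec.snd)
    (Primrec.const [])) Primrec.fst

theorem RecursiveInOracle.of_partrec {O : ℕ → ℕ} {F : ℕ →. ℕ} (hF : Nat.Partrec F) :
    RecursiveInOracle O F := by
  induction hF with
  | zero => exact .zero
  | succ => exact .succ
  | left => exact .left
  | right => exact .right
  | pair _ _ ih₁ ih₂ => exact .pair ih₁ ih₂
  | comp _ _ ih₁ ih₂ => exact .comp ih₁ ih₂
  | prec _ _ ih₁ ih₂ => exact .prec ih₁ ih₂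
  | rfind _ ih => exact .rfind ih

theorem RecursiveInOracle.of_eq {O : ℕ → ℕ} {F G : ℕ →. ℕ} (hF : RecursiveInOracle O F)
    (h : ∀ n, F n = G n) : RecursiveInOracle O G :=
  funext h ▸ hF

namespace RecIn

variable {O : ℕ → ℕ} {f g : ℕ → ℕ}

theorem iff_recursiveInOracle : RecIn O f ↔ RecursiveInOracle O fun n => Part.some (f n) := by
  unfold RecIn
  simp [Part.ofOption]

theorem of_computable (hf : Computable f) : RecIn O f :=
  iff_recursiveInOracle.mpr (.of_partrec (Partrec.nat_iff.mp hf))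

theorem comp (hf : RecIn O f) (hg : RecIn O g) : RecIn O fun n => f (g n) := by
  rw [iff_recursiveInOracle] at *
  simpa using RecursiveInOracle.comp hf hg

theorem pair (hf : RecIn O f) (hg : RecIn O g) : RecIn O fun n => Nat.pair (f n) (g n) := by
  rw [iff_recursiveInOracle] at *
  simpa [Seq.seq] using RecursiveInOracle.pair hf hg

theorem prec (hf : RecIn O f) (hg : RecIn O g) :
    RecIn O (Nat.unpaired fun a n =>
      Nat.rec (motive := fun _ => ℕ) (f a) (fun y IH => g (Nat.pair a (Nat.pair y IH))) n) := by
  rw [iff_recursiveInOracle] at *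
  refine (RecursiveInOracle.prec hf hg).of_eq fun n => ?_
  simp only [Nat.unpaired]
  induction n.unpair.2 with
  | zero => rfl
  | succ k ih => simp_all

theorem encode_history (hf : RecIn O f) : RecIn O fun k => Encodable.encode (history f k) := by
  -- on `n = ⟨a, ⟨k, c⟩⟩` this is the step `c ↦ Nat.pair (f k) c + 1` of `encode_history_succ`
  have hstep : RecIn O fun n : ℕ => Nat.pair (f n.unpair.2.unpair.1) n.unpair.2.unpair.2 + 1 :=
    (of_computable Computable.succ).comp ((hf.comp (of_computable (Computable.fst.comp
      (Computable.unpair.comp (Computable.snd.comp Computable.unpair))))).pair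
      (of_computable (Computable.snd.comp (Computable.unpair.comp (Computable.snd.comp
        Computable.unpair)))))
  convert (prec (of_computable (Computable.const 0)) hstep).comp
    (of_computable (Primrec₂.natPair.comp (Primrec.const 0) Primrec.id).to_comp) using 2 with k
  simp only [Nat.unpaired, Nat.unpair_pair]
  induction k with
  | zero => rfl
  | succ k ih => simp [ih, encode_history_succ]

end RecIn

theorem ComputablePred.computable_nat_find {α : Type*} [Primcodable α] {p : α → ℕ → Prop}
    [∀ a, DecidablePred (p a)] (hp : ComputablePred fun x : α × ℕ => p x.1 x.2)
    (H : ∀ a, ∃ n, p a n) : Computable fun a => Nat.find (H a) := by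
  obtain ⟨inst, hp⟩ := hp
  have hp₂ : Computable₂ fun a n => @decide (p a n) (inst (a, n)) := hp
  refine Partrec.of_eq_tot (Partrec.rfind hp₂.partrec₂)
    fun a => Nat.mem_rfind.mpr ⟨?_, fun hm => ?_⟩
  · simpa using Nat.find_spec (H a)
  · simpa using Nat.find_min (H a) hm

theorem Computable.of_eventuallyEq {f g : ℕ → ℕ} (hf : Computable f) (hfg : f =ᶠ[atTop] g) :
    Computable g := by
  obtain ⟨N, hN⟩ := eventually_atTop.mp hfg
  have hcase : Computable fun n => bif decide (n < N) then ((List.range N).map g).getI n else f n :=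
    Computable.cond (Primrec.nat_lt.comp Primrec.id (Primrec.const N)).decide.to_comp
      (Primrec.list_getI.comp (Primrec.const _) Primrec.id).to_comp hf
  refine hcase.of_eq fun n => ?_
  by_cases hn : n < N
  · have hlen : n < ((List.range N).map g).length := by simpa using hn
    simp [hn, List.getI_eq_getElem _ hlen]
  · simp [hn, hN n (not_lt.mp hn)]

theorem exists_computable_tendsto_le_comp {b p : ℕ → ℕ} (hb : Computable b) (hp : Computable p)
    (hpm : Monotone p) (hpu : ∀ m, ∃ n, m ≤ p n) :
    ∃ S : ℕ → ℕ, Computable S ∧ Tendsto S atTop atTop ∧ ∀ m, b m ≤ p (S m) := by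
  have hle : ComputablePred fun x : ℕ × ℕ => b x.1 ≤ p x.2 :=
    ⟨inferInstance, Primrec.nat_le.decide.to_comp.comp (hb.comp .fst) (hp.comp .snd)⟩
  refine ⟨fun m => Nat.find (hpu (b m)) + m,
    Primrec.nat_add.to_comp.comp (hle.computable_nat_find fun m => hpu (b m)) Computable.id,
    tendsto_atTop_mono (fun m => Nat.le_add_left m _) tendsto_id,
    fun m => (Nat.find_spec (hpu (b m))).trans (hpm (Nat.le_add_right _ m))⟩

theorem exists_computable_block_index {S : ℕ → ℕ} (hS : Computable S)
    (hS_top : Tendsto S atTop atTop) :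
    ∃ β : ℕ → ℕ, Computable β ∧ ∀ n, S 0 ≤ n → S (β n) ≤ n ∧ n < S (β n + 1) := by
  have H : ∀ n, ∃ m, n < S (m + 1) := fun n =>
    let ⟨N, hN⟩ := eventually_atTop.mp (hS_top.eventually_gt_atTop n)
    ⟨N, hN (N + 1) N.le_succ⟩
  have hlt : ComputablePred fun x : ℕ × ℕ => x.1 < S (x.2 + 1) :=
    ⟨inferInstance, Primrec.nat_lt.decide.to_comp.comp Computable.fst
      (hS.comp (Primrec.nat_add.to_comp.comp .snd (.const 1)))⟩
  refine ⟨fun n => Nat.find (H n), hlt.computable_nat_find H,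
    fun n hn => ⟨?_, Nat.find_spec (H n)⟩⟩
  show S (Nat.find (H n)) ≤ n
  rcases hβ : Nat.find (H n) with _ | k
  · exact hn
  · exact not_lt.mp (Nat.find_min (H n) (by omega))

def TracesWithin (g b f : ℕ → ℕ) : Prop := ∀ n, (Dfin (g n)).card ≤ b n ∧ f n ∈ Dfin (g n)

theorem exists_tracesWithin_of_eventually {g p f : ℕ → ℕ} (hg : Computable g)
    (hp : ∀ n, 0 < p n) (hgf : ∀ᶠ n in atTop, (Dfin (g n)).card ≤ p n ∧ f n ∈ Dfin (g n)) :
    ∃ g', Computable g' ∧ TracesWithin g' p f := by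
  obtain ⟨N, hN⟩ := eventually_atTop.mp hgf
  refine ⟨fun n => if n < N then 2 ^ f n else g n, hg.of_eventuallyEq ?_, fun n => ?_⟩
  · filter_upwards [eventually_ge_atTop N] with n hn
    simp [not_lt.mpr hn]
  · by_cases hn : n < N
    · simpa [hn, Dfin_two_pow, Nat.one_le_iff_ne_zero, Nat.pos_iff_ne_zero] using hp n
    · simpa [hn] using hN n (not_lt.mp hn)

theorem exists_tracesWithin_of_bound {O : ℕ → ℕ} {b p : ℕ → ℕ} (hb : Computable b)
    (htrace : ∀ F : ℕ → ℕ, RecIn O F → ∃ G, Computable G ∧ TracesWithin G b F)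
    (hp : Computable p) (hpm : Monotone p) (hpu : ∀ m, ∃ n, m ≤ p n) (hp0 : 0 < p 0)
    {f : ℕ → ℕ} (hf : RecIn O f) : ∃ g, Computable g ∧ TracesWithin g p f := by
  obtain ⟨S, hS, hS_top, hbS⟩ := exists_computable_tendsto_le_comp hb hp hpm hpu
  obtain ⟨β, hβ, hβS⟩ := exists_computable_block_index hS hS_top
  obtain ⟨G, hG, hGF⟩ := htrace (fun m => Encodable.encode (history f (S (m + 1))))
    (hf.encode_history.comp (.of_computable (hS.comp Computable.succ)))
  set g : ℕ → ℕ := fun n => imageCode (codedEntry (S (β n + 1) - 1 - n)) (G (β n)) with hg_def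
  have hg : Computable g :=
    (primrec_imageCode primrec₂_codedEntry).to_comp.comp
      (Primrec.nat_sub.to_comp.comp (Primrec.nat_sub.to_comp.comp
        (hS.comp (Computable.succ.comp hβ)) (.const 1)) .id) (hG.comp hβ)
  refine exists_tracesWithin_of_eventually hg (fun n => hp0.trans_le (hpm n.zero_le)) ?_
  filter_upwards [eventually_ge_atTop (S 0)] with n hn
  obtain ⟨hSn, hnS⟩ := hβS n hn
  rw [hg_def, Dfin_imageCode]
  refine ⟨?_, Finset.mem_image.mpr ⟨_, (hGF (β n)).2, ?_⟩⟩
  · calc ((Dfin (G (β n))).image _).card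
        ≤ (Dfin (G (β n))).card := Finset.card_image_le
      _ ≤ b (β n) := (hGF (β n)).1
      _ ≤ p (S (β n)) := hbS _
      _ ≤ p n := hpm hSn
  · rw [codedEntry_encode, getI_history f hnS]

/-- Terwijn–Zambella: `A` is recursively traceable iff for every unbounded,
non-decreasing computable `p` with `p 0 > 0`, every `f ≤_T A` has a computable trace with
bound `p`. -/
theorem stmt5 (A : Cantor) :
    RecTraceable A ↔
      ∀ p : ℕ → ℕ, Computable p → Monotone p → (∀ m, ∃ n, m ≤ p n) → 0 < p 0 →
        ∀ f : ℕ → ℕ, RecIn (oracleOf A) f →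
          ∃ g : ℕ → ℕ, Computable g ∧ ∀ n, (Dfin (g n)).card ≤ p n ∧ f n ∈ Dfin (g n) := by
  constructor
  · rintro ⟨b, hb, htrace⟩ p hp hpm hpu hp0 f hf
    exact exists_tracesWithin_of_bound hb htrace hp hpm hpu hp0 hf
  · intro h
    exact ⟨Nat.succ, Computable.succ, h _ Computable.succ (fun _ _ => Nat.succ_le_succ)
      (fun m => ⟨m, m.le_succ⟩) Nat.one_pos⟩
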